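/- arXiv:math/0608046 — 2 statements merged into one kernel-verified Lean document; each statement's English description precedes it below -/
import Mathlib

section
/- If R₀* is uniformly distributed as R₀* = (R*+1)Z where (R*, Z) is uniform on [0,A]×[0,2] with 0 < A < 2, then P(R₀* ≥ A) = 1 − (log(A+1))/2. -/
open MeasureTheory

lemma slice_aux (A : ℝ) (hA : 0 < A) (hA2 : A < 2) (r : ℝ) (hr : r ∈ Set.Icc (0:ℝ) A) :
    Prod.mk r ⁻¹' ((Set.Icc (0:ℝ) A ×ˢ Set.Icc (0:ℝ) 2) ∩
        {q : ℝ × ℝ | A ≤ (q.1 + 1) * q.2}) = Set.Icc (A / (r + 1)) 2 := by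
  have hr1 : (0:ℝ) < r + 1 := by linarith [hr.1]
  ext z
  simp only [Set.mem_preimage, Set.mem_inter_iff, Set.mem_prod, Set.mem_Icc, Set.mem_setOf_eq]
  constructor
  · rintro ⟨⟨-, hz0, hz2⟩, hle⟩
    exact ⟨(div_le_iff₀ hr1).2 (by linarith [mul_comm (r+1) z]), hz2⟩
  · rintro ⟨h1, h2⟩
    have hA0 : 0 ≤ A / (r + 1) := le_of_lt (div_pos hA hr1)
    have : A ≤ (r + 1) * z := by
      have := (div_le_iff₀ hr1).1 h1
      linarith [mul_comm z (r+1)]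
    exact ⟨⟨hr, le_trans hA0 h1, h2⟩, this⟩

/-- If R₀* = (R*+1)Z with (R*,Z) uniform on [0,A]×[0,2], 0 < A < 2, then
P(R₀* ≥ A) = 1 − (log(A+1))/2. -/
theorem stmt_4 (A : ℝ) (hA : 0 < A) (hA2 : A < 2) :
    (volume ((Set.Icc (0:ℝ) A ×ˢ Set.Icc (0:ℝ) 2) ∩
        {q : ℝ × ℝ | A ≤ (q.1 + 1) * q.2})).toReal / (2 * A)
      = 1 - Real.log (A + 1) / 2 := by
  set S := (Set.Icc (0:ℝ) A ×ˢ Set.Icc (0:ℝ) 2) ∩ {q : ℝ × ℝ | A ≤ (q.1 + 1) * q.2} with hSdef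
  have hSm : MeasurableSet S := by
    apply (measurableSet_Icc.prod measurableSet_Icc).inter
    exact measurableSet_le measurable_const (by fun_prop)
  -- key: value of the integral
  have hlog2 : Real.log (A + 1) < 2 := by
    have := Real.log_le_sub_one_of_pos (x := A + 1) (by linarith)
    linarith
  have hint : ∫ r in (0:ℝ)..A, (2 - A / (r + 1)) = 2 * A - A * Real.log (A + 1) := by
    have h1 : ∫ r in (0:ℝ)..A, (2:ℝ) = 2 * A := by simp [mul_comm]
    have h2 : ∫ r in (0:ℝ)..A, A / (r + 1) = A * Real.log (A + 1) := by
      have : ∫ r in (0:ℝ)..A, (r + 1)⁻¹ = Real.log (A + 1) := by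
        rw [intervalIntegral.integral_comp_add_right (fun x => x⁻¹) 1,
          integral_inv_of_pos (by norm_num) (by linarith)]
        norm_num
      calc ∫ r in (0:ℝ)..A, A / (r + 1) = ∫ r in (0:ℝ)..A, A * (r + 1)⁻¹ := by
            simp [div_eq_mul_inv]
        _ = A * ∫ r in (0:ℝ)..A, (r + 1)⁻¹ := by
            rw [intervalIntegral.integral_const_mul]
        _ = A * Real.log (A + 1) := by rw [this]
    rw [intervalIntegral.integral_sub, h1, h2]
    · exact intervalIntegrable_const
    · apply ContinuousOn.intervalIntegrable
      apply ContinuousOn.div continuousOn_const (by fun_prop)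
      intro x hx
      rw [Set.uIcc_of_le (le_of_lt hA)] at hx
      intro h; linarith [hx.1]
  have hcont : ContinuousOn (fun r : ℝ => 2 - A / (r + 1)) (Set.Icc 0 A) := by
    apply ContinuousOn.sub continuousOn_const
    apply ContinuousOn.div continuousOn_const (by fun_prop)
    intro x hx h; linarith [hx.1]
  have hnonneg : ∀ r ∈ Set.Icc (0:ℝ) A, 0 ≤ 2 - A / (r + 1) := by
    intro r hr
    have hr1 : (0:ℝ) < r + 1 := by linarith [hr.1]
    have : A / (r + 1) ≤ A := by
      rw [div_le_iff₀ hr1]; nlinarith [hr.1]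
    linarith
  have hvol : volume S = ENNReal.ofReal (2 * A - A * Real.log (A + 1)) := by
    rw [MeasureTheory.Measure.volume_eq_prod, Measure.prod_apply hSm]
    have hfun : ∀ r : ℝ, volume (Prod.mk r ⁻¹' S) =
        Set.indicator (Set.Icc (0:ℝ) A)
          (fun r => ENNReal.ofReal (2 - A / (r + 1))) r := by
      intro r
      by_cases hr : r ∈ Set.Icc (0:ℝ) A
      · rw [Set.indicator_of_mem hr, hSdef, slice_aux A hA hA2 r hr,
          Real.volume_Icc]
      · rw [Set.indicator_of_notMem hr]
        have : Prod.mk r ⁻¹' S = ∅ := by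
          ext z
          simp only [Set.mem_preimage, hSdef, Set.mem_inter_iff, Set.mem_prod,
            Set.mem_empty_iff_false, iff_false]
          rintro ⟨⟨h1, -⟩, -⟩
          exact hr h1
        rw [this, measure_empty]
    rw [lintegral_congr hfun, lintegral_indicator measurableSet_Icc]
    rw [← MeasureTheory.ofReal_integral_eq_lintegral_ofReal]
    · congr 1
      rw [← hint, intervalIntegral.integral_of_le (le_of_lt hA),
        ← MeasureTheory.integral_Icc_eq_integral_Ioc]
    · exact hcont.integrableOn_Icc
    · filter_upwards [ae_restrict_mem measurableSet_Icc] with r hr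
      exact hnonneg r hr
  rw [hvol, ENNReal.toReal_ofReal (by nlinarith)]
  field_simp
end

section
/- If R₀* = (R*+1)Z with (R*, Z) uniform on [0,A]×[0,2] and 0 < A < 2, then E(R₀* | R₀* < A) = A/2. -/
open MeasureTheory

lemma aux_log_int (A c : ℝ) (hA : 0 < A) :
    ∫ x in Set.Icc (0:ℝ) A, c / (x+1) = c * Real.log (A+1) := by
  rw [MeasureTheory.integral_Icc_eq_integral_Ioc, ← intervalIntegral.integral_of_le hA.le]
  have h1 : ∀ x : ℝ, c / (x+1) = c * (fun t : ℝ => t⁻¹) (x + 1) := by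
    intro x; simp [div_eq_mul_inv]
  simp only [h1]
  rw [intervalIntegral.integral_const_mul,
    intervalIntegral.integral_comp_add_right (fun t => t⁻¹) 1]
  rw [integral_inv (by
    intro h
    rw [Set.uIcc_of_le (by linarith : (0:ℝ)+1 ≤ A+1), Set.mem_Icc] at h
    linarith [h.1])]
  norm_num

/-- If R₀* = (R*+1)Z with (R*,Z) uniform on [0,A]×[0,2], 0 < A < 2, then
E(R₀* | R₀* < A) = A/2. -/
theorem stmt_5 (A : ℝ) (hA : 0 < A) (hA2 : A < 2) :
    (∫ q in (Set.Icc (0:ℝ) A ×ˢ Set.Icc (0:ℝ) 2) ∩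
        {q : ℝ × ℝ | (q.1 + 1) * q.2 < A}, (q.1 + 1) * q.2)
      / (volume ((Set.Icc (0:ℝ) A ×ˢ Set.Icc (0:ℝ) 2) ∩
        {q : ℝ × ℝ | (q.1 + 1) * q.2 < A})).toReal
      = A / 2 := by
  set B : Set (ℝ × ℝ) := {q | q.1 ∈ Set.Icc 0 A ∧ q.2 ∈ Set.Ico 0 (A/(q.1+1))} with hBdef
  -- the region equals B
  have hSeq : (Set.Icc (0:ℝ) A ×ˢ Set.Icc (0:ℝ) 2) ∩ {q : ℝ × ℝ | (q.1 + 1) * q.2 < A} = B := by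
    ext ⟨x, y⟩
    simp only [hBdef, Set.mem_inter_iff, Set.mem_prod, Set.mem_Icc, Set.mem_setOf_eq, Set.mem_Ico]
    constructor
    · rintro ⟨⟨⟨hx0, hxA⟩, hy0, hy2⟩, hlt⟩
      have hx1 : 0 < x + 1 := by linarith
      exact ⟨⟨hx0, hxA⟩, hy0, (lt_div_iff₀ hx1).2 (by linarith [mul_comm (x+1) y])⟩
    · rintro ⟨⟨hx0, hxA⟩, hy0, hyd⟩
      have hx1 : (1:ℝ) ≤ x + 1 := by linarith
      have hdA : A / (x + 1) ≤ A := div_le_self hA.le hx1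
      have := (lt_div_iff₀ (by linarith : (0:ℝ) < x+1)).1 hyd
      exact ⟨⟨⟨hx0, hxA⟩, hy0, by linarith⟩, by linarith [mul_comm y (x+1)]⟩
  have hB : MeasurableSet B := by
    apply MeasurableSet.inter
    · exact measurable_fst measurableSet_Icc
    · apply MeasurableSet.inter
      · exact measurable_snd measurableSet_Ici
      · exact measurableSet_lt measurable_snd
          (Measurable.div measurable_const ((measurable_fst).add measurable_const))
  -- slices of B
  have hslice : ∀ x : ℝ, x ∈ Set.Icc (0:ℝ) A → Prod.mk x ⁻¹' B = Set.Ico 0 (A/(x+1)) := by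
    intro x hx
    ext y
    simp only [Set.mem_preimage, hBdef, Set.mem_setOf_eq]
    exact ⟨fun h => h.2, fun h => ⟨hx, h⟩⟩
  have hslice' : ∀ x : ℝ, x ∉ Set.Icc (0:ℝ) A → Prod.mk x ⁻¹' B = ∅ := by
    intro x hx
    rw [Set.eq_empty_iff_forall_notMem]
    exact fun y h => hx h.1
  set L := Real.log (A + 1) with hLdef
  have hL : 0 < L := Real.log_pos (by linarith)
  -- volume of B
  have hvol : volume B = ENNReal.ofReal (A * L) := by
    rw [Measure.volume_eq_prod, Measure.prod_apply hB]
    have hind : (fun x => (volume : Measure ℝ) (Prod.mk x ⁻¹' B))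
        = Set.indicator (Set.Icc 0 A) (fun x => ENNReal.ofReal (A/(x+1))) := by
      funext x
      by_cases hx : x ∈ Set.Icc (0:ℝ) A
      · rw [hslice x hx, Real.volume_Ico, Set.indicator_of_mem hx, sub_zero]
      · rw [hslice' x hx, Set.indicator_of_notMem hx]; simp
    rw [hind, lintegral_indicator measurableSet_Icc,
      ← MeasureTheory.ofReal_integral_eq_lintegral_ofReal]
    · rw [aux_log_int A A hA]
    · exact (ContinuousOn.div continuousOn_const (by fun_prop)
        (fun x hx => by rcases hx with ⟨h0,_⟩; positivity)).integrableOn_Icc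
    · filter_upwards [MeasureTheory.ae_restrict_mem measurableSet_Icc] with x hx
      rcases hx with ⟨h0, _⟩
      positivity
  -- B is contained in a compact box
  have hsub : B ⊆ Set.Icc (0:ℝ) A ×ˢ Set.Icc (0:ℝ) 2 := by
    rintro ⟨x, y⟩ ⟨⟨hx0, hxA⟩, hy0, hyd⟩
    have hx1 : (1:ℝ) ≤ x + 1 := by linarith
    have hdA : A / (x + 1) ≤ A := div_le_self hA.le hx1
    exact ⟨⟨hx0, hxA⟩, hy0, by linarith⟩
  have hcont : Continuous (fun q : ℝ × ℝ => (q.1 + 1) * q.2) := by fun_prop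
  have hIntB : IntegrableOn (fun q : ℝ × ℝ => (q.1 + 1) * q.2) B volume :=
    (hcont.continuousOn.integrableOn_compact (isCompact_Icc.prod isCompact_Icc)).mono_set hsub
  -- numerator
  have hnum : (∫ q in B, (q.1 + 1) * q.2) = A^2/2 * L := by
    rw [← MeasureTheory.integral_indicator hB]
    have hint2 : Integrable (B.indicator (fun q : ℝ × ℝ => (q.1 + 1) * q.2))
        ((volume : Measure ℝ).prod volume) := by
      rw [← Measure.volume_eq_prod]
      exact (integrable_indicator_iff hB).2 hIntB
    rw [Measure.volume_eq_prod]
    rw [MeasureTheory.integral_prod _ hint2]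
    have hinner : ∀ x : ℝ, (∫ y, B.indicator (fun q : ℝ × ℝ => (q.1 + 1) * q.2) (x, y))
        = Set.indicator (Set.Icc 0 A) (fun x => (A^2/2) / (x+1)) x := by
      intro x
      have hrw : (fun y => B.indicator (fun q : ℝ × ℝ => (q.1 + 1) * q.2) (x, y))
          = (Prod.mk x ⁻¹' B).indicator (fun y => (x + 1) * y) := by
        funext y
        by_cases h : (x, y) ∈ B <;>
          simp [Set.indicator_apply, Set.mem_preimage, h]
      rw [hrw]
      by_cases hx : x ∈ Set.Icc (0:ℝ) A
      · have hx0 : (0:ℝ) ≤ x := hx.1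
        have hx1 : (0:ℝ) < x + 1 := by linarith
        have hc0 : 0 ≤ A / (x + 1) := by positivity
        rw [hslice x hx, MeasureTheory.integral_indicator measurableSet_Ico,
          integral_Ico_eq_integral_Ioo, ← integral_Ioc_eq_integral_Ioo,
          ← intervalIntegral.integral_of_le hc0,
          intervalIntegral.integral_const_mul, integral_id,
          Set.indicator_of_mem hx]
        field_simp
        ring
      · rw [hslice' x hx, Set.indicator_of_notMem hx]
        simp
    simp_rw [hinner]
    rw [MeasureTheory.integral_indicator measurableSet_Icc, aux_log_int A (A^2/2) hA]
  rw [hSeq, hnum, hvol, ENNReal.toReal_ofReal (by positivity)]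
  field_simp
end
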